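/- Suppose (w, b) together with multipliers α satisfies the soft margin KKT conditions at cost C > 0, and there exists at least one index i with α i = C (in particular if there is at least one slack vector). Then ‖w‖ ≥ C * G, where G is the two-class gap; equivalently the margin ρ = 1/‖w‖ satisfies ρ ≤ 1/(C * G). -/

import Mathlib

open scoped RealInnerProductSpace BigOperators

variable {E : Type*} [NormedAddCommGroup E] [InnerProductSpace ℝ E]

/-- The two-class gap: the infimum distance between the convex hulls of the two classes. -/
noncomputable def twoClassGap {n : ℕ} (x : Fin n → E) (y : Fin n → ℝ) : ℝ :=
  sInf {g : ℝ | ∃ cp ∈ convexHull ℝ (x '' {i | y i = 1}),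
    ∃ cm ∈ convexHull ℝ (x '' {i | y i = -1}), g = ‖cp - cm‖}

open Classical in
/-- The index set of the positive class. -/
noncomputable def posSet {n : ℕ} (y : Fin n → ℝ) : Finset (Fin n) :=
  Finset.univ.filter (fun i => y i = 1)

open Classical in
/-- The index set of the negative class. -/
noncomputable def negSet {n : ℕ} (y : Fin n → ℝ) : Finset (Fin n) :=
  Finset.univ.filter (fun i => y i = -1)

/-- The soft margin KKT conditions at cost `C` for `(w, b)` with multipliers `α`. -/
def SoftKKT {n : ℕ} (x : Fin n → E) (y : Fin n → ℝ) (C : ℝ) (w : E) (b : ℝ)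
    (α : Fin n → ℝ) : Prop :=
  (∀ i, 0 ≤ α i ∧ α i ≤ C) ∧
  w = (∑ i ∈ posSet y, α i • x i) - (∑ i ∈ negSet y, α i • x i) ∧
  (∑ i ∈ posSet y, α i) = (∑ i ∈ negSet y, α i) ∧
  (∀ i, α i < C → 1 ≤ y i * (⟪w, x i⟫ + b)) ∧
  (∀ i, y i * (⟪w, x i⟫ + b) < 1 → α i = C) ∧
  (∀ i, 0 < α i → y i * (⟪w, x i⟫ + b) ≤ 1)

/-!
Both classes carry the same total multiplier `S`, so `w = S • (c₊ - c₋)` where `c₊`, `c₋`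
are the `α`-weighted centres of mass of the classes; these lie in the convex hulls,
whence `‖w‖ ≥ S * G`. Finally `S ≥ α i = C` for the index `i` at the upper bound.
-/

section

variable {n : ℕ} {x : Fin n → E} {y : Fin n → ℝ} {i : Fin n}

theorem mem_posSet : i ∈ posSet y ↔ y i = 1 := by
  simp [posSet]

theorem mem_negSet : i ∈ negSet y ↔ y i = -1 := by
  simp [negSet]

theorem twoClassGap_nonneg : 0 ≤ twoClassGap x y :=
  Real.sInf_nonneg (by rintro _ ⟨_, -, _, -, rfl⟩; exact norm_nonneg _)

theorem twoClassGap_le_norm_sub {cp cm : E} (hp : cp ∈ convexHull ℝ (x '' {i | y i = 1}))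
    (hm : cm ∈ convexHull ℝ (x '' {i | y i = -1})) :
    twoClassGap x y ≤ ‖cp - cm‖ :=
  csInf_le ⟨0, by rintro _ ⟨_, -, _, -, rfl⟩; exact norm_nonneg _⟩ ⟨cp, hp, cm, hm, rfl⟩

end

theorem Finset.exists_mem_convexHull_sum_smul_eq {ι F : Type*} [AddCommGroup F] [Module ℝ F]
    {s : Finset ι} {w : ι → ℝ} {z : ι → F} {A : Set F} (hw : ∀ i ∈ s, 0 ≤ w i)
    (hpos : 0 < ∑ i ∈ s, w i) (hz : ∀ i ∈ s, z i ∈ A) :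
    ∃ c ∈ convexHull ℝ A, ∑ i ∈ s, w i • z i = (∑ i ∈ s, w i) • c :=
  ⟨s.centerMass w z, s.centerMass_mem_convexHull hw hpos hz,
    by rw [Finset.centerMass, smul_inv_smul₀ hpos.ne']⟩

theorem mul_twoClassGap_le_norm_sub_sum {n : ℕ} (x : Fin n → E) {y α : Fin n → ℝ}
    (hα : ∀ i, 0 ≤ α i) (hsum : ∑ i ∈ posSet y, α i = ∑ i ∈ negSet y, α i) :
    (∑ i ∈ posSet y, α i) * twoClassGap x y ≤
      ‖(∑ i ∈ posSet y, α i • x i) - ∑ i ∈ negSet y, α i • x i‖ := by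
  have hS₀ : 0 ≤ ∑ i ∈ posSet y, α i := Finset.sum_nonneg fun i _ => hα i
  rcases hS₀.eq_or_lt with hS | hS
  · rw [← hS, zero_mul]
    exact norm_nonneg _
  obtain ⟨cp, hcp, hp⟩ := Finset.exists_mem_convexHull_sum_smul_eq (fun i _ => hα i) hS
    (A := x '' {i | y i = 1}) (fun i hi => ⟨i, mem_posSet.1 hi, rfl⟩)
  obtain ⟨cm, hcm, hm⟩ := Finset.exists_mem_convexHull_sum_smul_eq (fun i _ => hα i)
    (hsum ▸ hS) (A := x '' {i | y i = -1}) (fun i hi => ⟨i, mem_negSet.1 hi, rfl⟩)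
  rw [hp, hm, ← hsum, ← smul_sub, norm_smul, Real.norm_of_nonneg hS.le]
  exact mul_le_mul_of_nonneg_left (twoClassGap_le_norm_sub hcp hcm) hS.le

theorem le_sum_posSet {n : ℕ} {y α : Fin n → ℝ} (hy : ∀ i, y i = 1 ∨ y i = -1)
    (hα : ∀ i, 0 ≤ α i) (hsum : ∑ i ∈ posSet y, α i = ∑ i ∈ negSet y, α i) (i : Fin n) :
    α i ≤ ∑ j ∈ posSet y, α j := by
  rcases hy i with h | h
  · exact Finset.single_le_sum (fun j _ => hα j) (mem_posSet.2 h)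
  · exact hsum ▸ Finset.single_le_sum (fun j _ => hα j) (mem_negSet.2 h)

theorem soft_margin_gap_bound_general {n : ℕ} (x : Fin n → E) (y : Fin n → ℝ)
    (hy : ∀ i, y i = 1 ∨ y i = -1)
    (C : ℝ) (w : E) (b : ℝ) (α : Fin n → ℝ)
    (hkkt : SoftKKT x y C w b α)
    (hslack : ∃ i, α i = C) :
    C * twoClassGap x y ≤ ‖w‖ := by
  obtain ⟨hα, hw, hsum, -⟩ := hkkt
  obtain ⟨i, rfl⟩ := hslack
  have hα_nonneg : ∀ j, 0 ≤ α j := fun j => (hα j).1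
  calc α i * twoClassGap x y ≤ (∑ j ∈ posSet y, α j) * twoClassGap x y := by
        gcongr
        · exact twoClassGap_nonneg
        · exact le_sum_posSet hy hα_nonneg hsum i
    _ ≤ ‖w‖ := hw ▸ mul_twoClassGap_le_norm_sub_sum x hα_nonneg hsum

theorem soft_margin_gap_bound {n : ℕ} (x : Fin n → E) (y : Fin n → ℝ)
    (hy : ∀ i, y i = 1 ∨ y i = -1)
    (hpos : ∃ i, y i = 1) (hneg : ∃ i, y i = -1)
    (C : ℝ) (hC : 0 < C) (w : E) (b : ℝ) (α : Fin n → ℝ)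
    (hkkt : SoftKKT x y C w b α)
    (hslack : ∃ i, α i = C) :
    C * twoClassGap x y ≤ ‖w‖ :=
  soft_margin_gap_bound_general x y hy C w b α hkkt hslack
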